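/- Let X be a two-dimensional real normed space satisfying property (P-ρS) for some 0 < ρ < 1, and let s: [0,2π] → S, s(θ) = (cos θ, sin θ)/‖(cos θ, sin θ)‖, be the natural parametrization of the unit sphere, with s⊥(θ) ∈ S the unit vector Birkhoff-orthogonal to s(θ) with s(θ) ≺ s⊥(θ). Then for any 0 ≤ α < β ≤ 2π, the Riemann–Stieltjes integral ∫_α^β μ(θ) s⊥(θ) ∧ ds(θ) = 0, where μ(θ) > 0 is the unique number with ρ(s(θ) ± μ(θ)s⊥(θ)) ∈ S, and x ∧ y = x₁y₂ − x₂y₁. -/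

import Mathlib

/-!
Birkhoff orthogonality makes `s(τ) + ℝ s⊥(τ)` a supporting line of the unit ball, so every
chord `s(b) - s(τ)` has `s⊥(τ)` on one side and `s⊥(b)` on the other. Writing
`s⊥ = E (cos φ, sin φ)`, this bounds `s⊥(τ) ∧ (s(b) - s(a))` for `a ≤ τ ≤ b` by
`2 E(τ) · max ‖s(·) - s(τ)‖ · (φ(b) - φ(a))`. The supporting directions turn counterclockwise,
so `φ` is monotone and the Riemann–Stieltjes sums telescope to `o(1) · (φ(β) - φ(α))`; the
weight `μ` is bounded because `ρ(s + μ s⊥)` lies on the unit sphere.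
-/

open Real Set

/-- `N` is a norm on the two-dimensional real vector space `ℝ × ℝ`. -/
def IsNorm (N : ℝ × ℝ → ℝ) : Prop :=
  (∀ x, N x = 0 ↔ x = 0) ∧ (∀ (a : ℝ) (x : ℝ × ℝ), N (a • x) = |a| * N x) ∧
    ∀ x y, N (x + y) ≤ N x + N y

/-- The 2D cross product `u ∧ v`; `u ≺ v` means `0 < wedge u v`. -/
def wedge (u v : ℝ × ℝ) : ℝ := u.1 * v.2 - u.2 * v.1

/-- `inf_{t ∈ [0,1]} N ((1−t)u + tv)`, the minimal `N`-norm on the segment `[u,v]`. -/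
noncomputable def segInf (N : ℝ × ℝ → ℝ) (u v : ℝ × ℝ) : ℝ :=
  sInf ((fun t : ℝ => N ((1 - t) • u + t • v)) '' Icc (0:ℝ) 1)

/-- Property (P-ρS): every chord of the unit sphere of `N` that supports `ρS`
touches `ρS` at its midpoint. -/
def PropP (N : ℝ × ℝ → ℝ) (ρ : ℝ) : Prop :=
  ∀ u v : ℝ × ℝ, N u = 1 → N v = 1 → segInf N u v = ρ →
    N ((1/2 : ℝ) • u + (1/2 : ℝ) • v) = ρ

/-- `HasRSIntegral F G a b I` says the Riemann–Stieltjes integral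
`∫_a^b F(θ) ∧ dG(θ)` exists and equals `I`: Riemann–Stieltjes sums over tagged
partitions of `[a,b]` with small mesh are close to `I`. -/
def HasRSIntegral (F G : ℝ → ℝ × ℝ) (a b I : ℝ) : Prop :=
  ∀ ε > (0:ℝ), ∃ δ > (0:ℝ), ∀ (n : ℕ) (t τ : ℕ → ℝ), 0 < n →
    t 0 = a → t n = b →
    (∀ i < n, t i ≤ τ i ∧ τ i ≤ t (i + 1) ∧ t i ≤ t (i + 1) ∧ t (i + 1) - t i < δ) →
    |(∑ i ∈ Finset.range n, wedge (F (τ i)) (G (t (i + 1)) - G (t i))) - I| < ε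

noncomputable def unitVec (θ : ℝ) : ℝ × ℝ := (Real.cos θ, Real.sin θ)

lemma continuous_unitVec : Continuous unitVec :=
  Real.continuous_cos.prodMk Real.continuous_sin

lemma unitVec_ne_zero (θ : ℝ) : unitVec θ ≠ 0 := by
  intro h
  have h₁ : Real.cos θ = 0 := congrArg Prod.fst h
  have h₂ : Real.sin θ = 0 := congrArg Prod.snd h
  simpa [h₁, h₂] using Real.sin_sq_add_cos_sq θ

lemma norm_unitVec_sub_le (a b : ℝ) : ‖unitVec a - unitVec b‖ ≤ |a - b| :=
  max_le (Real.abs_cos_sub_cos_le a b) (Real.abs_sin_sub_sin_le a b)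

lemma wedge_smul_left (a : ℝ) (x y : ℝ × ℝ) : wedge (a • x) y = a * wedge x y := by
  simp only [wedge, Prod.smul_fst, Prod.smul_snd, smul_eq_mul]; ring

lemma wedge_smul_right (a : ℝ) (x y : ℝ × ℝ) : wedge x (a • y) = a * wedge x y := by
  simp only [wedge, Prod.smul_fst, Prod.smul_snd, smul_eq_mul]; ring

lemma wedge_sub_left (x y z : ℝ × ℝ) : wedge (x - y) z = wedge x z - wedge y z := by
  simp only [wedge, Prod.fst_sub, Prod.snd_sub]; ring

lemma wedge_sub_right (x y z : ℝ × ℝ) : wedge x (y - z) = wedge x y - wedge x z := by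
  simp only [wedge, Prod.fst_sub, Prod.snd_sub]; ring

lemma wedge_neg_right (x y : ℝ × ℝ) : wedge x (-y) = -wedge x y := by
  simp only [wedge, Prod.fst_neg, Prod.snd_neg]; ring

lemma wedge_unitVec (a b : ℝ) : wedge (unitVec a) (unitVec b) = Real.sin (b - a) := by
  simp only [wedge, unitVec, Real.sin_sub]; ring

lemma abs_wedge_le (x y : ℝ × ℝ) : |wedge x y| ≤ 2 * ‖x‖ * ‖y‖ := by
  have h₁ : |x.1| ≤ ‖x‖ := norm_fst_le x
  have h₂ : |x.2| ≤ ‖x‖ := norm_snd_le x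
  have h₃ : |y.1| ≤ ‖y‖ := norm_fst_le y
  have h₄ : |y.2| ≤ ‖y‖ := norm_snd_le y
  calc |wedge x y| ≤ |x.1| * |y.2| + |x.2| * |y.1| := by
        simpa only [wedge, abs_mul] using abs_sub (x.1 * y.2) (x.2 * y.1)
    _ ≤ 2 * ‖x‖ * ‖y‖ := by
        nlinarith [abs_nonneg x.1, abs_nonneg x.2, abs_nonneg y.1, abs_nonneg y.2]

lemma exists_polar_of_wedge_unitVec_pos {θ : ℝ} {v : ℝ × ℝ} (hv : 0 < wedge (unitVec θ) v) :
    ∃ E φ : ℝ, 0 < E ∧ θ < φ ∧ φ < θ + π ∧ v = E • unitVec φ := by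
  -- `z` is `v` rotated by `-θ` and read as a complex number; it lies in the upper half plane.
  set z : ℂ := ⟨v.1 * Real.cos θ + v.2 * Real.sin θ, v.2 * Real.cos θ - v.1 * Real.sin θ⟩
  have hz : 0 < z.im := by simpa [z, wedge, unitVec, mul_comm] using hv
  have harg₀ : 0 < Complex.arg z := by
    refine (Complex.arg_nonneg_iff.2 hz.le).lt_of_ne fun h => ?_
    exact hz.ne' (Complex.arg_eq_zero_iff.1 h.symm).2
  have hargπ : Complex.arg z < π := Complex.arg_lt_pi_iff.2 (Or.inr hz.ne')
  refine ⟨‖z‖, θ + Complex.arg z, norm_pos_iff.2 fun h => by simp [h] at hz, by linarith,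
    by linarith, ?_⟩
  have hre := Complex.norm_mul_cos_arg z
  have him := Complex.norm_mul_sin_arg z
  have hθ := Real.sin_sq_add_cos_sq θ
  ext
  · simp only [Prod.smul_fst, unitVec, smul_eq_mul, Real.cos_add]
    linear_combination (-Real.cos θ) * hre + Real.sin θ * him - v.1 * hθ
  · simp only [Prod.smul_snd, unitVec, smul_eq_mul, Real.sin_add]
    linear_combination (-Real.sin θ) * hre - Real.cos θ * him - v.2 * hθ

namespace IsNorm

variable {N : ℝ × ℝ → ℝ}

lemma neg (hN : IsNorm N) (x : ℝ × ℝ) : N (-x) = N x := by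
  simpa using hN.2.1 (-1) x

lemma nonneg (hN : IsNorm N) (x : ℝ × ℝ) : 0 ≤ N x := by
  have h := hN.2.2 x (-x)
  rw [add_neg_cancel, (hN.1 0).2 rfl, hN.neg] at h
  linarith

lemma pos (hN : IsNorm N) {x : ℝ × ℝ} (hx : x ≠ 0) : 0 < N x :=
  (hN.nonneg x).lt_of_ne fun h => hx ((hN.1 x).1 h.symm)

lemma sub_le (hN : IsNorm N) (x y : ℝ × ℝ) : N (x - y) ≤ N x + N y := by
  simpa only [sub_eq_add_neg, hN.neg] using hN.2.2 x (-y)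

lemma abs_sub_le (hN : IsNorm N) (x y : ℝ × ℝ) : |N x - N y| ≤ N (x - y) := by
  have h₁ := hN.2.2 (x - y) y
  have h₂ := hN.2.2 (y - x) x
  rw [sub_add_cancel] at h₁ h₂
  rw [← neg_sub x y, hN.neg] at h₂
  exact abs_sub_le_iff.2 ⟨by linarith, by linarith⟩

lemma le_mul_norm (hN : IsNorm N) (x : ℝ × ℝ) : N x ≤ (N (1, 0) + N (0, 1)) * ‖x‖ := by
  have hx : x = x.1 • ((1 : ℝ), (0 : ℝ)) + x.2 • ((0 : ℝ), (1 : ℝ)) := by ext <;> simp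
  have h₁ : |x.1| ≤ ‖x‖ := norm_fst_le x
  have h₂ : |x.2| ≤ ‖x‖ := norm_snd_le x
  calc N x ≤ |x.1| * N (1, 0) + |x.2| * N (0, 1) := by
        rw [← hN.2.1, ← hN.2.1]; nth_rw 1 [hx]; exact hN.2.2 _ _
    _ ≤ (N (1, 0) + N (0, 1)) * ‖x‖ := by
        nlinarith [hN.nonneg (1, 0), hN.nonneg (0, 1)]

lemma continuous (hN : IsNorm N) : Continuous N := by
  have hC : 0 ≤ N (1, 0) + N (0, 1) := add_nonneg (hN.nonneg _) (hN.nonneg _)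
  refine (LipschitzWith.of_dist_le_mul (K := (N (1, 0) + N (0, 1)).toNNReal)
    fun x y => ?_).continuous
  rw [Real.dist_eq, dist_eq_norm, Real.coe_toNNReal _ hC]
  exact (hN.abs_sub_le x y).trans (hN.le_mul_norm _)

lemma exists_pos_le_unitVec (hN : IsNorm N) : ∃ m > 0, ∀ θ, m ≤ N (unitVec θ) := by
  have hper : Function.Periodic (N ∘ unitVec) (2 * π) := fun θ => by
    simp [unitVec, Real.cos_add_two_pi, Real.sin_add_two_pi]
  obtain ⟨m, ⟨θ₀, rfl⟩, hm⟩ := (hper.compact_of_continuous Real.two_pi_pos.ne'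
    (hN.continuous.comp continuous_unitVec)).exists_isLeast (range_nonempty _)
  exact ⟨_, hN.pos (unitVec_ne_zero θ₀), fun θ => hm ⟨θ, rfl⟩⟩

lemma apply_inv_smul_self (hN : IsNorm N) {x : ℝ × ℝ} (hx : x ≠ 0) : N ((N x)⁻¹ • x) = 1 := by
  rw [hN.2.1, abs_inv, abs_of_pos (hN.pos hx), inv_mul_cancel₀ (hN.pos hx).ne']

lemma le_inv_of_smul_unitVec {m E φ : ℝ} (hN : IsNorm N) (hm : 0 < m)
    (hmN : ∀ θ, m ≤ N (unitVec θ)) (hE : 0 < E) (h : N (E • unitVec φ) = 1) : E ≤ m⁻¹ := by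
  rw [hN.2.1, abs_of_pos hE] at h
  rw [le_inv_comm₀ hE hm, ← one_div, le_div_iff₀ hE]
  nlinarith [hmN φ]

/-- A Birkhoff-orthogonal direction `v` to `p` gives a supporting line of the ball at `p`. -/
lemma wedge_mul_le (hN : IsNorm N) {p v : ℝ × ℝ} (hpv : 0 < wedge p v)
    (hbirk : ∀ l : ℝ, N p ≤ N (p + l • v)) (x : ℝ × ℝ) :
    wedge x v * N p ≤ N x * wedge p v := by
  rcases le_or_gt (wedge x v) 0 with hx | hx
  · nlinarith [hN.nonneg x, hN.nonneg p]
  set t := wedge x v / wedge p v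
  have ht : 0 < t := div_pos hx hpv
  have hxt : x = t • (p + (wedge p x / wedge x v) • v) := by
    have := hpv.ne'
    have := hx.ne'
    ext <;> simp only [t, Prod.smul_fst, Prod.smul_snd, Prod.fst_add, Prod.snd_add, smul_eq_mul] <;>
      field_simp <;> simp only [wedge] <;> ring
  have hNx : t * N p ≤ N x := by
    rw [hxt, hN.2.1, abs_of_pos ht]
    exact mul_le_mul_of_nonneg_left (hbirk _) ht.le
  calc wedge x v * N p = t * N p * wedge p v := by
        simp only [t]; field_simp
    _ ≤ N x * wedge p v := mul_le_mul_of_nonneg_right hNx hpv.le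

lemma wedge_sub_nonneg_of_birkhoff (hN : IsNorm N) {p v x : ℝ × ℝ} (hp : N p = 1)
    (hpv : 0 < wedge p v) (hbirk : ∀ l : ℝ, N p ≤ N (p + l • v)) (hx : N x ≤ 1) :
    0 ≤ wedge v (x - p) := by
  have h := hN.wedge_mul_le hpv hbirk x
  rw [hp, mul_one] at h
  have h' : wedge x v ≤ wedge p v := h.trans (mul_le_of_le_one_left hpv.le hx)
  simp only [wedge, Prod.fst_sub, Prod.snd_sub] at h' ⊢
  linarith

lemma abs_le_of_smul_add_mem_sphere (hN : IsNorm N) {ρ μ : ℝ} {x v : ℝ × ℝ} (hρ : 0 < ρ)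
    (hx : N x = 1) (hv : N v = 1) (h : N (ρ • (x + μ • v)) = 1) : |μ| ≤ (1 + ρ) / ρ := by
  have hsub := hN.sub_le (ρ • (x + μ • v)) (ρ • x)
  rw [show ρ • (x + μ • v) - ρ • x = (ρ * μ) • v by module, hN.2.1 (ρ * μ), h, hN.2.1 ρ x, hx, hv,
    abs_mul, abs_of_pos hρ] at hsub
  rw [le_div_iff₀ hρ]
  linarith

end IsNorm

lemma wedge_smul_unitVec_le {E φ ψ : ℝ} {c : ℝ × ℝ} (hE : 0 ≤ E)
    (hψ : wedge (unitVec ψ) c ≤ 0) : wedge (E • unitVec φ) c ≤ 2 * E * |φ - ψ| * ‖c‖ := by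
  have h : wedge (unitVec φ) c ≤ 2 * |φ - ψ| * ‖c‖ :=
    calc wedge (unitVec φ) c ≤ wedge (unitVec φ - unitVec ψ) c := by
          rw [wedge_sub_left]; linarith
      _ ≤ 2 * ‖unitVec φ - unitVec ψ‖ * ‖c‖ := (le_abs_self _).trans (abs_wedge_le _ _)
      _ ≤ 2 * |φ - ψ| * ‖c‖ := by gcongr; exact norm_unitVec_sub_le φ ψ
  rw [wedge_smul_left]
  nlinarith

/-- Along a curve `θ ↦ r(θ) • unitVec θ` around the origin, the supporting directions
`unitVec φ` turn counterclockwise. -/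
lemma le_of_wedge_unitVec_nonneg {θ₁ θ₂ φ₁ φ₂ r₁ r₂ : ℝ} (hθ : θ₁ < θ₂)
    (hφ₁ : φ₁ < θ₁ + π) (hφ₂ : θ₂ < φ₂) (hr₁ : 0 < r₁)
    (h₁ : 0 ≤ wedge (unitVec φ₁) (r₂ • unitVec θ₂ - r₁ • unitVec θ₁))
    (h₂ : 0 ≤ wedge (unitVec φ₂) (r₁ • unitVec θ₁ - r₂ • unitVec θ₂)) : φ₁ ≤ φ₂ := by
  by_contra! hφ
  simp only [wedge_sub_right, wedge_smul_right, wedge_unitVec] at h₁ h₂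
  have ha : Real.sin (θ₂ - φ₁) < 0 := Real.sin_neg_of_neg_of_neg_pi_lt (by linarith) (by linarith)
  have hb : Real.sin (θ₁ - φ₁) < 0 := Real.sin_neg_of_neg_of_neg_pi_lt (by linarith) (by linarith)
  have hc : Real.sin (θ₁ - φ₂) < 0 := Real.sin_neg_of_neg_of_neg_pi_lt (by linarith) (by linarith)
  have hd : Real.sin (θ₂ - φ₂) < 0 := Real.sin_neg_of_neg_of_neg_pi_lt (by linarith) (by linarith)
  have hθφ : 0 < Real.sin (θ₂ - θ₁) * Real.sin (φ₁ - φ₂) :=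
    mul_pos (Real.sin_pos_of_pos_of_lt_pi (by linarith) (by linarith))
      (Real.sin_pos_of_pos_of_lt_pi (by linarith) (by linarith))
  have hid : Real.sin (θ₂ - φ₁) * Real.sin (θ₁ - φ₂) - Real.sin (θ₁ - φ₁) * Real.sin (θ₂ - φ₂)
      = Real.sin (θ₂ - θ₁) * Real.sin (φ₁ - φ₂) := by
    simp only [Real.sin_sub]; ring
  have hprod : r₂ * -Real.sin (θ₂ - φ₁) * (r₁ * -Real.sin (θ₁ - φ₂))
      ≤ r₁ * -Real.sin (θ₁ - φ₁) * (r₂ * -Real.sin (θ₂ - φ₂)) :=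
    mul_le_mul (by linarith) (by linarith) (by nlinarith) (by nlinarith)
  nlinarith

section SupportingDirections

variable {s u : ℝ → ℝ × ℝ} {E φ : ℝ → ℝ} {I : Set ℝ}

lemma monotoneOn_of_supporting {R : ℝ → ℝ}
    (hsupp : ∀ τ ∈ I, ∀ θ ∈ I, 0 ≤ wedge (u τ) (s θ - s τ))
    (hpolar : ∀ τ ∈ I, 0 < E τ ∧ u τ = E τ • unitVec (φ τ))
    (hs : ∀ θ ∈ I, 0 < R θ ∧ s θ = R θ • unitVec θ)
    (hφ : ∀ θ ∈ I, θ < φ θ ∧ φ θ < θ + π) : MonotoneOn φ I := by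
  intro θ₁ h₁ θ₂ h₂ hle
  rcases hle.eq_or_lt with rfl | hlt
  · rfl
  have key : ∀ {a b}, a ∈ I → b ∈ I →
      0 ≤ wedge (unitVec (φ a)) (R b • unitVec b - R a • unitVec a) := fun ha hb => by
    have h := hsupp _ ha _ hb
    rw [(hpolar _ ha).2, (hs _ ha).2, (hs _ hb).2, wedge_smul_left] at h
    exact nonneg_of_mul_nonneg_right h (hpolar _ ha).1
  exact le_of_wedge_unitVec_nonneg hlt (hφ _ h₁).2 (hφ _ h₂).1 (hs _ h₁).1 (key h₁ h₂)
    (key h₂ h₁)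

lemma wedge_sub_le_of_supporting
    (hsupp : ∀ τ ∈ I, ∀ θ ∈ I, 0 ≤ wedge (u τ) (s θ - s τ))
    (hpolar : ∀ τ ∈ I, 0 < E τ ∧ u τ = E τ • unitVec (φ τ)) {τ b : ℝ} (hτ : τ ∈ I)
    (hb : b ∈ I) : wedge (u τ) (s b - s τ) ≤ 2 * E τ * |φ τ - φ b| * ‖s b - s τ‖ := by
  have h := hsupp b hb τ hτ
  rw [(hpolar b hb).2, wedge_smul_left, ← neg_sub, wedge_neg_right] at h
  rw [(hpolar τ hτ).2]
  exact wedge_smul_unitVec_le (hpolar τ hτ).1.le (by nlinarith [(hpolar b hb).1])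

lemma abs_wedge_sub_le_of_supporting
    (hsupp : ∀ τ ∈ I, ∀ θ ∈ I, 0 ≤ wedge (u τ) (s θ - s τ))
    (hpolar : ∀ τ ∈ I, 0 < E τ ∧ u τ = E τ • unitVec (φ τ)) (hφ : MonotoneOn φ I)
    {a τ b r : ℝ} (ha : a ∈ I) (hτ : τ ∈ I) (hb : b ∈ I) (haτ : a ≤ τ) (hτb : τ ≤ b)
    (hrb : ‖s b - s τ‖ ≤ r) (hra : ‖s a - s τ‖ ≤ r) :
    |wedge (u τ) (s b - s a)| ≤ 2 * E τ * r * (φ b - φ a) := by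
  have hE := (hpolar τ hτ).1
  have hφb : |φ τ - φ b| = φ b - φ τ := by
    rw [abs_sub_comm, abs_of_nonneg (sub_nonneg.2 (hφ hτ hb hτb))]
  have hφa : |φ τ - φ a| = φ τ - φ a := abs_of_nonneg (sub_nonneg.2 (hφ ha hτ haτ))
  have hX := wedge_sub_le_of_supporting hsupp hpolar hτ hb
  have hY := wedge_sub_le_of_supporting hsupp hpolar hτ ha
  rw [hφb] at hX
  rw [hφa] at hY
  have hX' : wedge (u τ) (s b - s τ) ≤ 2 * E τ * (φ b - φ τ) * r :=
    hX.trans (mul_le_mul_of_nonneg_left hrb (by nlinarith [hφ hτ hb hτb]))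
  have hY' : wedge (u τ) (s a - s τ) ≤ 2 * E τ * (φ τ - φ a) * r :=
    hY.trans (mul_le_mul_of_nonneg_left hra (by nlinarith [hφ ha hτ haτ]))
  have hsplit : wedge (u τ) (s b - s a) = wedge (u τ) (s b - s τ) - wedge (u τ) (s a - s τ) := by
    rw [← wedge_sub_right, sub_sub_sub_cancel_right]
  rw [hsplit, abs_le]
  constructor <;> nlinarith [hsupp τ hτ b hb, hsupp τ hτ a ha]

lemma exists_abs_wedge_smul_sub_le_of_supporting {w : ℝ → ℝ} {C : ℝ}
    (hsupp : ∀ τ ∈ I, ∀ θ ∈ I, 0 ≤ wedge (u τ) (s θ - s τ))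
    (hpolar : ∀ τ ∈ I, 0 < E τ ∧ u τ = E τ • unitVec (φ τ)) (hφ : MonotoneOn φ I)
    (hs : UniformContinuousOn s I) (hC : ∀ τ ∈ I, |w τ| * E τ ≤ C) :
    ∀ ε > 0, ∃ δ > 0, ∀ a τ b, a ∈ I → τ ∈ I → b ∈ I → a ≤ τ → τ ≤ b → b - a < δ →
      |wedge (w τ • u τ) (s b - s a)| ≤ ε * (φ b - φ a) := by
  intro ε hε
  set r := ε / (2 * |C| + 1)
  obtain ⟨δ, hδ, hδs⟩ := Metric.uniformContinuousOn_iff.1 hs r (by positivity)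
  refine ⟨δ, hδ, fun a τ b ha hτ hb haτ hτb hab => ?_⟩
  have hdist : ∀ x ∈ I, a ≤ x → x ≤ b → ‖s x - s τ‖ ≤ r := fun x hx hax hxb =>
    (hδs x hx τ hτ (by rw [Real.dist_eq, abs_lt]; constructor <;> linarith)).le
  have h := abs_wedge_sub_le_of_supporting hsupp hpolar hφ ha hτ hb haτ hτb
    (hdist b hb (haτ.trans hτb) le_rfl) (hdist a ha le_rfl (haτ.trans hτb))
  have hr : 2 * |C| * r ≤ ε := by
    rw [mul_div_assoc']
    exact (div_le_iff₀ (by positivity)).2 (by nlinarith [abs_nonneg C])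
  have hφab : 0 ≤ φ b - φ a := sub_nonneg.2 (hφ ha hb (haτ.trans hτb))
  rw [wedge_smul_left, abs_mul]
  calc |w τ| * |wedge (u τ) (s b - s a)| ≤ |w τ| * (2 * E τ * r * (φ b - φ a)) :=
        mul_le_mul_of_nonneg_left h (abs_nonneg _)
    _ = 2 * (|w τ| * E τ) * r * (φ b - φ a) := by ring
    _ ≤ 2 * |C| * r * (φ b - φ a) := by
        gcongr
        exact (hC τ hτ).trans (le_abs_self C)
    _ ≤ ε * (φ b - φ a) := by gcongr

end SupportingDirections

lemma mem_Icc_of_le_succ {t : ℕ → ℝ} {n : ℕ} (ht : ∀ i < n, t i ≤ t (i + 1)) {i : ℕ}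
    (hi : i ≤ n) : t i ∈ Icc (t 0) (t n) := by
  have hmono : ∀ j k, j ≤ k → k ≤ n → t j ≤ t k := by
    intro j k hjk hkn
    induction k, hjk using Nat.le_induction with
    | base => rfl
    | succ k _ ih => exact (ih (by omega)).trans (ht k (by omega))
  exact ⟨hmono 0 i i.zero_le hi, hmono i n hi le_rfl⟩

/-- Riemann–Stieltjes sums telescope against `φ`, so a bound of the local increments by
`ε * (φ b - φ a)` forces the integral to vanish. -/
lemma hasRSIntegral_zero_of_abs_wedge_le {F G : ℝ → ℝ × ℝ} {α β : ℝ} {I : Set ℝ} (φ : ℝ → ℝ)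
    (hI : Icc α β ⊆ I)
    (h : ∀ ε > 0, ∃ δ > 0, ∀ a τ b, a ∈ I → τ ∈ I → b ∈ I → a ≤ τ → τ ≤ b → b - a < δ →
      |wedge (F τ) (G b - G a)| ≤ ε * (φ b - φ a)) :
    HasRSIntegral F G α β 0 := by
  intro ε hε
  set ε' := ε / (|φ β - φ α| + 1)
  obtain ⟨δ, hδ, hδh⟩ := h ε' (by positivity)
  refine ⟨δ, hδ, fun n t τ _ ht0 htn ht => ?_⟩
  have hmem : ∀ i ≤ n, t i ∈ Icc α β := fun i hi => by
    simpa only [ht0, htn] using mem_Icc_of_le_succ (fun j hj => (ht j hj).2.2.1) hi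
  have hterm : ∀ i ∈ Finset.range n,
      |wedge (F (τ i)) (G (t (i + 1)) - G (t i))| ≤ ε' * (φ (t (i + 1)) - φ (t i)) := by
    intro i hi
    rw [Finset.mem_range] at hi
    obtain ⟨hτ₁, hτ₂, -, hδi⟩ := ht i hi
    have ha := hmem i hi.le
    have hb := hmem (i + 1) hi
    exact hδh _ _ _ (hI ha) (hI ⟨ha.1.trans hτ₁, hτ₂.trans hb.2⟩) (hI hb) hτ₁ hτ₂ hδi
  rw [sub_zero]
  calc |∑ i ∈ Finset.range n, wedge (F (τ i)) (G (t (i + 1)) - G (t i))|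
      ≤ ∑ i ∈ Finset.range n, ε' * (φ (t (i + 1)) - φ (t i)) :=
        (Finset.abs_sum_le_sum_abs _ _).trans (Finset.sum_le_sum hterm)
    _ = ε' * (φ β - φ α) := by
        rw [← Finset.mul_sum, Finset.sum_range_sub (fun i => φ (t i)), ht0, htn]
    _ ≤ ε' * |φ β - φ α| := by gcongr; exact le_abs_self _
    _ < ε := by
        rw [div_mul_eq_mul_div, div_lt_iff₀ (by positivity)]
        nlinarith

theorem stmt_13_general (N : ℝ × ℝ → ℝ) (hN : IsNorm N) (ρ : ℝ) (hρ0 : 0 < ρ)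
    (s sperp : ℝ → ℝ × ℝ) (μ : ℝ → ℝ)
    (hs : ∀ θ : ℝ, s θ = (N (Real.cos θ, Real.sin θ))⁻¹ • ((Real.cos θ, Real.sin θ) : ℝ × ℝ))
    (hperp : ∀ θ ∈ Icc (0:ℝ) (2 * π), N (sperp θ) = 1 ∧ 0 < wedge (s θ) (sperp θ) ∧
      ∀ l : ℝ, N (s θ) ≤ N (s θ + l • sperp θ))
    (hμ : ∀ θ ∈ Icc (0:ℝ) (2 * π), 0 < μ θ ∧ N (ρ • (s θ - μ θ • sperp θ)) = 1 ∧
      N (ρ • (s θ + μ θ • sperp θ)) = 1)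
    (α β : ℝ) (hα : 0 ≤ α) (hβ : β ≤ 2 * π) :
    HasRSIntegral (fun θ => μ θ • sperp θ) s α β 0 := by
  have hs' : s = fun θ => (N (unitVec θ))⁻¹ • unitVec θ := funext hs
  have hNpos : ∀ θ, 0 < N (unitVec θ) := fun θ => hN.pos (unitVec_ne_zero θ)
  have hsN : ∀ θ, N (s θ) = 1 := fun θ => hs' ▸ hN.apply_inv_smul_self (unitVec_ne_zero θ)
  have hsupp : ∀ τ ∈ Icc 0 (2 * π), ∀ θ ∈ Icc 0 (2 * π), 0 ≤ wedge (sperp τ) (s θ - s τ) :=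
    fun τ hτ θ _ => hN.wedge_sub_nonneg_of_birkhoff (hsN τ) (hperp τ hτ).2.1 (hperp τ hτ).2.2
      (hsN θ).le
  have hpolar : ∀ τ ∈ Icc 0 (2 * π), ∃ E φ : ℝ,
      (0 < E ∧ sperp τ = E • unitVec φ) ∧ τ < φ ∧ φ < τ + π := by
    intro τ hτ
    have h := (hperp τ hτ).2.1
    rw [hs', wedge_smul_left] at h
    obtain ⟨E, φ, hE, h₁, h₂, hv⟩ :=
      exists_polar_of_wedge_unitVec_pos (pos_of_mul_pos_right h (inv_pos.2 (hNpos τ)).le)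
    exact ⟨E, φ, ⟨hE, hv⟩, h₁, h₂⟩
  choose! E φ hEφ hφ using hpolar
  obtain ⟨m, hm, hmN⟩ := hN.exists_pos_le_unitVec
  have hC : ∀ τ ∈ Icc 0 (2 * π), |μ τ| * E τ ≤ (1 + ρ) / ρ * m⁻¹ := fun τ hτ =>
    mul_le_mul (hN.abs_le_of_smul_add_mem_sphere hρ0 (hsN τ) (hperp τ hτ).1 (hμ τ hτ).2.2)
      (hN.le_inv_of_smul_unitVec hm hmN (hEφ τ hτ).1 ((hEφ τ hτ).2 ▸ (hperp τ hτ).1))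
      (hEφ τ hτ).1.le (by positivity)
  have hmono := monotoneOn_of_supporting hsupp hEφ
    (fun θ _ => ⟨inv_pos.2 (hNpos θ), congrFun hs' θ⟩) hφ
  have hcont : Continuous s := hs' ▸
    ((hN.continuous.comp continuous_unitVec).inv₀ fun θ => (hNpos θ).ne').smul continuous_unitVec
  exact hasRSIntegral_zero_of_abs_wedge_le φ (Icc_subset_Icc hα hβ)
    (exists_abs_wedge_smul_sub_le_of_supporting hsupp hEφ hmono
      (isCompact_Icc.uniformContinuousOn_of_continuous hcont.continuousOn) hC)

/-- Under (P-ρS), with `s` the natural parametrization of `S`,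
`s⊥(θ)` the Birkhoff-orthogonal successor of `s(θ)`, and `μ(θ) > 0` the unique
number with `ρ(s(θ) ± μ(θ)s⊥(θ)) ∈ S`, the Riemann–Stieltjes integral
`∫_α^β μ(θ) s⊥(θ) ∧ ds(θ)` equals `0` for all `0 ≤ α < β ≤ 2π`. -/
theorem stmt_13 (N : ℝ × ℝ → ℝ) (hN : IsNorm N) (ρ : ℝ) (hρ0 : 0 < ρ) (hρ1 : ρ < 1)
    (hP : PropP N ρ) (s sperp : ℝ → ℝ × ℝ) (μ : ℝ → ℝ)
    (hs : ∀ θ : ℝ, s θ = (N (Real.cos θ, Real.sin θ))⁻¹ • ((Real.cos θ, Real.sin θ) : ℝ × ℝ))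
    (hperp : ∀ θ ∈ Icc (0:ℝ) (2 * π), N (sperp θ) = 1 ∧ 0 < wedge (s θ) (sperp θ) ∧
      ∀ l : ℝ, N (s θ) ≤ N (s θ + l • sperp θ))
    (hμ : ∀ θ ∈ Icc (0:ℝ) (2 * π), 0 < μ θ ∧ N (ρ • (s θ - μ θ • sperp θ)) = 1 ∧
      N (ρ • (s θ + μ θ • sperp θ)) = 1)
    (α β : ℝ) (hα : 0 ≤ α) (hαβ : α < β) (hβ : β ≤ 2 * π) :
    HasRSIntegral (fun θ => μ θ • sperp θ) s α β 0 :=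
  stmt_13_general N hN ρ hρ0 s sperp μ hs hperp hμ α β hα hβ
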